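/- arXiv:2406.07527 — 6 statements merged into one kernel-verified Lean document; each statement's English description precedes it below -/
import Mathlib

section
/- Let g be a continuous real-valued function on [a,b] with a < b, and set s = (g(b) − g(a))/(b − a). Then there exists a point x ∈ [a,b] at which the lower right Dini derivative of g is at least s, and there exists a point y ∈ [a,b] at which it is at most s. -/
open Filter

/-- Lower right Dini derivative: `D₊g(x) = liminf_{ε→0⁺} (g(x+ε) − g(x))/ε`, as an `EReal`. -/
noncomputable def lowerDini (g : ℝ → ℝ) (x : ℝ) : EReal :=
  liminf (fun ε : ℝ => (((g (x + ε) - g x) / ε : ℝ) : EReal)) (nhdsWithin 0 (Set.Ioi 0))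

/-- Dini mean value theorem: if `g` is continuous on `[a,b]` with `a < b` and
`s = (g(b) − g(a))/(b − a)`, then there are points of `[a,b]` where the lower right Dini
derivative is at least `s`, and at most `s`. -/
theorem stmt1 (a b : ℝ) (hab : a < b) (g : ℝ → ℝ)
    (hg : ContinuousOn g (Set.Icc a b)) :
    (∃ x ∈ Set.Icc a b, (((g b - g a) / (b - a) : ℝ) : EReal) ≤ lowerDini g x) ∧
    (∃ y ∈ Set.Icc a b, lowerDini g y ≤ (((g b - g a) / (b - a) : ℝ) : EReal)) := by
  set s : ℝ := (g b - g a) / (b - a) with hs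
  have hb0 : (0:ℝ) < b - a := sub_pos.2 hab
  have hsa : s * (b - a) = g b - g a := div_mul_cancel₀ _ (ne_of_gt hb0)
  set h : ℝ → ℝ := fun t => g t - s * t with hh
  have hcont : ContinuousOn h (Set.Icc a b) :=
    hg.sub ((continuousOn_const).mul continuousOn_id)
  have hne : (Set.Icc a b).Nonempty := Set.nonempty_Icc.2 hab.le
  have hab' : h a = h b := by simp only [hh]; nlinarith [hsa]
  obtain ⟨xm, hxm, hxmin⟩ := isCompact_Icc.exists_isMinOn hne hcont
  obtain ⟨xM, hxM, hxmax⟩ := isCompact_Icc.exists_isMaxOn hne hcont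
  have key_lo : ∀ p : ℝ, p ∈ Set.Icc a b → p < b → (∀ t ∈ Set.Icc a b, h p ≤ h t) →
      ((s : ℝ) : EReal) ≤ lowerDini g p := by
    intro p hp hpb hmin
    refine Filter.le_liminf_of_le (by isBoundedDefault) ?_
    have hmem : Set.Ioo (0:ℝ) (b - p) ∈ nhdsWithin (0:ℝ) (Set.Ioi 0) :=
      Ioo_mem_nhdsGT_of_mem ⟨le_refl 0, sub_pos.2 hpb⟩
    filter_upwards [hmem] with ε hε
    obtain ⟨hε0, hεb⟩ := hε
    have hpε : p + ε ∈ Set.Icc a b :=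
      ⟨le_trans hp.1 (by linarith), by linarith⟩
    have := hmin (p + ε) hpε
    simp only [hh] at this
    rw [EReal.coe_le_coe_iff, le_div_iff₀ hε0]
    nlinarith
  have key_hi : ∀ p : ℝ, p ∈ Set.Icc a b → p < b → (∀ t ∈ Set.Icc a b, h t ≤ h p) →
      lowerDini g p ≤ ((s : ℝ) : EReal) := by
    intro p hp hpb hmax
    refine Filter.liminf_le_of_frequently_le ?_ (by isBoundedDefault)
    refine Filter.Eventually.frequently ?_
    have hmem : Set.Ioo (0:ℝ) (b - p) ∈ nhdsWithin (0:ℝ) (Set.Ioi 0) :=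
      Ioo_mem_nhdsGT_of_mem ⟨le_refl 0, sub_pos.2 hpb⟩
    filter_upwards [hmem] with ε hε
    obtain ⟨hε0, hεb⟩ := hε
    have hpε : p + ε ∈ Set.Icc a b :=
      ⟨le_trans hp.1 (by linarith), by linarith⟩
    have := hmax (p + ε) hpε
    simp only [hh] at this
    rw [EReal.coe_le_coe_iff, div_le_iff₀ hε0]
    nlinarith
  constructor
  · by_cases hxb : xm < b
    · exact ⟨xm, hxm, key_lo xm hxm hxb (fun t ht => hxmin ht)⟩
    · have hxmb : xm = b := le_antisymm hxm.2 (not_lt.1 hxb)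
      refine ⟨a, Set.left_mem_Icc.2 hab.le, key_lo a (Set.left_mem_Icc.2 hab.le) hab ?_⟩
      intro t ht
      calc h a = h xm := by rw [hxmb, hab']
        _ ≤ h t := hxmin ht
  · by_cases hxb : xM < b
    · exact ⟨xM, hxM, key_hi xM hxM hxb (fun t ht => hxmax ht)⟩
    · have hxMb : xM = b := le_antisymm hxM.2 (not_lt.1 hxb)
      refine ⟨a, Set.left_mem_Icc.2 hab.le, key_hi a (Set.left_mem_Icc.2 hab.le) hab ?_⟩
      intro t ht
      calc h t ≤ h xM := hxmax ht
        _ = h a := by rw [hxMb, hab']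
end

section
/- Let 0 ≤ λ < α and let g: ℝ → (λ, α) be continuous. Then the upper right Dini derivative of g satisfies D⁺g(x) ∈ [λ − g(x), α − g(x)] for all x ∈ ℝ if and only if for all x₀ ∈ ℝ and x > 0 one has λ − (λ − g(x₀))·exp(−x) ≤ g(x₀ + x) ≤ α − (α − g(x₀))·exp(−x). -/
/-!
Both bounds compare `g` with solutions of `y' = c - y`, namely
`t ↦ c - (c - g x₀) e^{-(t - x₀)}` for `c = λ` and `c = α`. Dividing the bounds by `x` and
letting `x → 0⁺` gives the Dini bounds, since `(1 - e^{-x}) / x → 1`. Conversely, the Dini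
bounds let Mathlib's fencing theorem `image_le_of_liminf_slope_right_lt_deriv_boundary` trap `g`
below the solution for `c + ε`, for every `ε > 0`. Only the lower Dini bound of `g` is not of
the form this theorem needs; it is used as an upper bound for the slopes of `-g` instead.
-/

open Filter

/-- Upper right Dini derivative as an `EReal`. -/
noncomputable def upperDini (f : ℝ → ℝ) (x : ℝ) : EReal :=
  limsup (fun ε : ℝ => (((f (x + ε) - f x) / ε : ℝ) : EReal)) (nhdsWithin 0 (Set.Ioi 0))

open Set Topology

lemma upperDini_eq_limsup_slope (f : ℝ → ℝ) (t : ℝ) :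
    upperDini f t = limsup (fun z => (slope f t z : EReal)) (𝓝[>] t) := by
  have hmap : map (t + ·) (𝓝[>] 0) = 𝓝[>] t := by simp
  rw [← hmap, ← limsup_comp]
  simp only [Function.comp_def, slope_def_field, add_sub_cancel_left]
  rfl

lemma frequently_slope_lt_of_upperDini_lt {f : ℝ → ℝ} {t r : ℝ} (h : upperDini f t < r) :
    ∃ᶠ z in 𝓝[>] t, slope f t z < r := by
  rw [upperDini_eq_limsup_slope] at h
  exact (eventually_lt_of_limsup_lt h).frequently.mono fun z hz => EReal.coe_lt_coe_iff.1 hz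

lemma frequently_slope_neg_lt_of_lt_upperDini {f : ℝ → ℝ} {t r : ℝ}
    (h : ((-r : ℝ) : EReal) < upperDini f t) : ∃ᶠ z in 𝓝[>] t, slope (-f) t z < r := by
  rw [upperDini_eq_limsup_slope] at h
  refine (frequently_lt_of_lt_limsup (by isBoundedDefault) h).mono fun z hz => ?_
  rw [slope_neg_fun]
  show -slope f t z < r
  linarith [EReal.coe_lt_coe_iff.1 hz]

lemma hasDerivAt_sub_mul_exp_neg_sub (d k a t : ℝ) :
    HasDerivAt (fun t => d - k * Real.exp (-(t - a))) (k * Real.exp (-(t - a))) t := by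
  simpa using (((((hasDerivAt_id t).sub_const a).neg).exp).const_mul k).const_sub d

theorem le_sub_mul_exp_of_frequently_slope_lt {f : ℝ → ℝ} {a b c : ℝ}
    (hf : ContinuousOn f (Icc a b)) (hab : a ≤ b)
    (hslope : ∀ t ∈ Ico a b, ∀ r, c - f t < r → ∃ᶠ z in 𝓝[>] t, slope f t z < r) :
    f b ≤ c - (c - f a) * Real.exp (-(b - a)) := by
  refine le_of_forall_pos_le_add fun ε hε => ?_
  have hbarrier := image_le_of_liminf_slope_right_lt_deriv_boundary hf hslope
    (B := fun t => (c + ε) - (c + ε - f a) * Real.exp (-(t - a))) (by simp)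
    (hasDerivAt_sub_mul_exp_neg_sub _ _ a) (fun t _ ht => by linarith)
    ⟨hab, le_rfl⟩
  nlinarith [mul_pos hε (Real.exp_pos (-(b - a)))]

lemma le_sub_mul_exp_of_upperDini_le {f : ℝ → ℝ} {c : ℝ} (hf : Continuous f)
    (h : ∀ t, upperDini f t ≤ ((c - f t : ℝ) : EReal)) (x₀ : ℝ) {x : ℝ} (hx : 0 < x) :
    f (x₀ + x) ≤ c - (c - f x₀) * Real.exp (-x) := by
  simpa using le_sub_mul_exp_of_frequently_slope_lt hf.continuousOn
    (by linarith : x₀ ≤ x₀ + x)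
    fun t _ r hr => frequently_slope_lt_of_upperDini_lt ((h t).trans_lt (EReal.coe_lt_coe hr))

lemma sub_mul_exp_le_of_le_upperDini {f : ℝ → ℝ} {c : ℝ} (hf : Continuous f)
    (h : ∀ t, ((c - f t : ℝ) : EReal) ≤ upperDini f t) (x₀ : ℝ) {x : ℝ} (hx : 0 < x) :
    c - (c - f x₀) * Real.exp (-x) ≤ f (x₀ + x) := by
  have hneg := le_sub_mul_exp_of_frequently_slope_lt (c := -c) hf.neg.continuousOn
    (by linarith : x₀ ≤ x₀ + x) fun t _ r hr =>
      frequently_slope_neg_lt_of_lt_upperDini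
        ((EReal.coe_lt_coe (by simp only [Pi.neg_apply] at hr; linarith)).trans_le (h t))
  simp only [Pi.neg_apply, add_sub_cancel_left] at hneg
  linarith

lemma tendsto_one_sub_exp_neg_div :
    Tendsto (fun ε => (1 - Real.exp (-ε)) / ε) (𝓝[≠] 0) (𝓝 1) := by
  have hderiv : HasDerivAt (fun ε => 1 - Real.exp (-ε)) 1 0 := by
    simpa using ((hasDerivAt_id (0 : ℝ)).neg.exp).const_sub 1
  refine (hasDerivAt_iff_tendsto_slope.1 hderiv).congr fun ε => ?_
  simp [slope_def_field]

lemma tendsto_coe_mul_one_sub_exp_neg_div (k : ℝ) :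
    Tendsto (fun ε => ((k * ((1 - Real.exp (-ε)) / ε) : ℝ) : EReal)) (𝓝[>] 0) (𝓝 k) := by
  refine (continuous_coe_real_ereal.tendsto k).comp ?_
  simpa using (tendsto_one_sub_exp_neg_div.mono_left (nhdsGT_le_nhdsNE 0)).const_mul k

lemma upperDini_le_of_le_sub_mul_exp {f : ℝ → ℝ} {x c : ℝ}
    (h : ∀ ε, 0 < ε → f (x + ε) ≤ c - (c - f x) * Real.exp (-ε)) :
    upperDini f x ≤ ((c - f x : ℝ) : EReal) := by
  rw [← (tendsto_coe_mul_one_sub_exp_neg_div (c - f x)).limsup_eq]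
  refine limsup_le_limsup ?_
  filter_upwards [self_mem_nhdsWithin] with ε (hε : 0 < ε)
  rw [EReal.coe_le_coe_iff, ← mul_div_assoc, div_le_div_iff_of_pos_right hε]
  linarith [h ε hε]

lemma le_upperDini_of_sub_mul_exp_le {f : ℝ → ℝ} {x c : ℝ}
    (h : ∀ ε, 0 < ε → c - (c - f x) * Real.exp (-ε) ≤ f (x + ε)) :
    ((c - f x : ℝ) : EReal) ≤ upperDini f x := by
  rw [← (tendsto_coe_mul_one_sub_exp_neg_div (c - f x)).liminf_eq]
  refine le_trans (liminf_le_liminf ?_) liminf_le_limsup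
  filter_upwards [self_mem_nhdsWithin] with ε (hε : 0 < ε)
  rw [EReal.coe_le_coe_iff, ← mul_div_assoc, div_le_div_iff_of_pos_right hε]
  linarith [h ε hε]

theorem stmt3_general (lam alp : ℝ)
    (g : ℝ → ℝ) (hg : Continuous g) :
    (∀ x : ℝ, upperDini g x ∈
      Set.Icc ((lam - g x : ℝ) : EReal) ((alp - g x : ℝ) : EReal)) ↔
    (∀ x₀ x : ℝ, 0 < x →
      lam - (lam - g x₀) * Real.exp (-x) ≤ g (x₀ + x) ∧
      g (x₀ + x) ≤ alp - (alp - g x₀) * Real.exp (-x)) := by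
  refine ⟨fun h x₀ x hx => ⟨?_, ?_⟩, fun h x => ⟨?_, ?_⟩⟩
  · exact sub_mul_exp_le_of_le_upperDini hg (fun t => (h t).1) x₀ hx
  · exact le_sub_mul_exp_of_upperDini_le hg (fun t => (h t).2) x₀ hx
  · exact le_upperDini_of_sub_mul_exp_le fun ε hε => (h x ε hε).1
  · exact upperDini_le_of_le_sub_mul_exp fun ε hε => (h x ε hε).2

/-- For continuous `g : ℝ → (λ,α)` with `0 ≤ λ < α`, the Dini derivative bound
`D⁺g(x) ∈ [λ − g(x), α − g(x)]` for all `x` holds iff for all `x₀` and `x > 0`,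
`λ − (λ − g(x₀))e^{−x} ≤ g(x₀+x) ≤ α − (α − g(x₀))e^{−x}`. -/
theorem stmt3 (lam alp : ℝ) (hlam : 0 ≤ lam) (hla : lam < alp)
    (g : ℝ → ℝ) (hg : Continuous g) (hrange : ∀ x, g x ∈ Set.Ioo lam alp) :
    (∀ x : ℝ, upperDini g x ∈
      Set.Icc ((lam - g x : ℝ) : EReal) ((alp - g x : ℝ) : EReal)) ↔
    (∀ x₀ x : ℝ, 0 < x →
      lam - (lam - g x₀) * Real.exp (-x) ≤ g (x₀ + x) ∧
      g (x₀ + x) ≤ alp - (alp - g x₀) * Real.exp (-x)) :=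
  stmt3_general lam alp g hg
end

section
/- Let 0 ≤ λ < α ≤ d, let 0 < θ ≤ φ ≤ 1, and let h(θ) ∈ (λ, α). Define g: (0,1] → ℝ by g(φ) = (A·φ·α + λ)/(A·φ + 1) where A = (h(θ) − λ)/(θ·(α − h(θ))). Then g solves the differential equation g'(φ') = (g(φ') − λ)(α − g(φ'))/((α − λ)·φ') on (0,1) with g(θ) = h(θ), and g(φ) = h(θ) + (h(θ) − λ)(α − h(θ))·(φ − θ)/(φ·(h(θ) − λ) + θ·(α − h(θ))). -/
/-!
`G x - λ = A x (α - λ)/(A x + 1)` and `α - G x = (α - λ)/(A x + 1)`, so the right-hand side of the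
ODE is `A (α - λ)/(A x + 1)²`, which is the derivative of the Möbius function `G`. The constant
`A` is chosen so that `A θ = (h - λ)/(α - h)`, which is exactly the condition `G θ = h`.
-/

namespace Mobius

noncomputable def interp (a lam alp x : ℝ) : ℝ := (a * x * alp + lam) / (a * x + 1)

variable {a lam alp x : ℝ}

theorem interp_sub_left (hx : a * x + 1 ≠ 0) :
    interp a lam alp x - lam = a * x * (alp - lam) / (a * x + 1) := by
  unfold interp
  field_simp
  ring

theorem sub_interp (hx : a * x + 1 ≠ 0) :
    alp - interp a lam alp x = (alp - lam) / (a * x + 1) := by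
  unfold interp
  field_simp
  ring

theorem hasDerivAt_interp (hx : a * x + 1 ≠ 0) :
    HasDerivAt (interp a lam alp) (a * (alp - lam) / (a * x + 1) ^ 2) x := by
  have hnum : HasDerivAt (fun x ↦ a * x * alp + lam) (a * alp) x := by
    simpa using (((hasDerivAt_id x).const_mul a).mul_const alp).add_const lam
  have hden : HasDerivAt (fun x ↦ a * x + 1) a x := by
    simpa using ((hasDerivAt_id x).const_mul a).add_const 1
  exact (hnum.div hden hx).congr_deriv (by ring)

theorem hasDerivAt_interp_ode (hx : a * x + 1 ≠ 0) (hx0 : x ≠ 0) (hla : alp - lam ≠ 0) :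
    HasDerivAt (interp a lam alp)
      ((interp a lam alp x - lam) * (alp - interp a lam alp x) / ((alp - lam) * x)) x := by
  convert hasDerivAt_interp hx using 1
  rw [interp_sub_left hx, sub_interp hx]
  field_simp

variable {θ h : ℝ}

theorem interp_apply_eq (hθ : θ ≠ 0) (hh : alp - h ≠ 0) (hla : alp - lam ≠ 0) :
    interp ((h - lam) / (θ * (alp - h))) lam alp θ = h := by
  have hden : h - lam + (alp - h) ≠ 0 := by rwa [sub_add_sub_cancel']
  unfold interp
  field_simp
  ring

theorem interp_eq_add_div {φ : ℝ} (hθ : θ ≠ 0) (hh : alp - h ≠ 0)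
    (hφ : φ * (h - lam) + θ * (alp - h) ≠ 0) :
    interp ((h - lam) / (θ * (alp - h))) lam alp φ
      = h + (h - lam) * (alp - h) * (φ - θ) / (φ * (h - lam) + θ * (alp - h)) := by
  have hφ' : (h - lam) * φ + θ * (alp - h) ≠ 0 := by rwa [mul_comm] at hφ
  unfold interp
  field_simp
  ring

end Mobius

open Mobius in
theorem stmt6_general (lam alp θ φ h : ℝ)
    (hθ : 0 < θ) (hθφ : θ ≤ φ)
    (hh : h ∈ Set.Ioo lam alp) :
    let A : ℝ := (h - lam) / (θ * (alp - h))
    let G : ℝ → ℝ := fun x => (A * x * alp + lam) / (A * x + 1)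
    (∀ x ∈ Set.Ioo (0 : ℝ) 1,
      HasDerivAt G ((G x - lam) * (alp - G x) / ((alp - lam) * x)) x) ∧
    G θ = h ∧
    G φ = h + (h - lam) * (alp - h) * (φ - θ) / (φ * (h - lam) + θ * (alp - h)) := by
  intro A G
  rw [show G = interp A lam alp from rfl]
  obtain ⟨hlh, hha⟩ := hh
  have hA : 0 < A := div_pos (sub_pos.2 hlh) (mul_pos hθ (sub_pos.2 hha))
  have hla : alp - lam ≠ 0 := by linarith
  refine ⟨fun x hx ↦ hasDerivAt_interp_ode (by nlinarith [hx.1]) hx.1.ne' hla,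
    interp_apply_eq hθ.ne' (by linarith) hla, interp_eq_add_div hθ.ne' (by linarith) ?_⟩
  nlinarith

/-- The Möbius function `g(φ) = (Aφα + λ)/(Aφ + 1)` with `A = (h−λ)/(θ(α−h))` solves the ODE
`g' = (g−λ)(α−g)/((α−λ)φ')` on `(0,1)`, satisfies `g(θ) = h`, and
`g(φ) = h + (h−λ)(α−h)(φ−θ)/(φ(h−λ)+θ(α−h))`. -/
theorem stmt6 (lam alp d θ φ h : ℝ)
    (h0 : 0 ≤ lam) (hla : lam < alp) (had : alp ≤ d)
    (hθ : 0 < θ) (hθφ : θ ≤ φ) (hφ1 : φ ≤ 1)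
    (hh : h ∈ Set.Ioo lam alp) :
    let A : ℝ := (h - lam) / (θ * (alp - h))
    let G : ℝ → ℝ := fun x => (A * x * alp + lam) / (A * x + 1)
    (∀ x ∈ Set.Ioo (0 : ℝ) 1,
      HasDerivAt G ((G x - lam) * (alp - G x) / ((alp - lam) * x)) x) ∧
    G θ = h ∧
    G φ = h + (h - lam) * (alp - h) * (φ - θ) / (φ * (h - lam) + θ * (alp - h)) :=
  stmt6_general lam alp θ φ h hθ hθφ hh
end

section
/- Let 0 ≤ λ < α and let h: [0,1] → [λ, α] be non-decreasing, continuous on (0,1], and satisfy the Dini derivative bound D⁺h(θ) ≤ (h(θ) − λ)(α − h(θ))/((α − λ)·θ) for all θ ∈ (0,1). Then for all 0 < θ ≤ φ ≤ 1, h(φ) ≤ h(θ) + (h(θ) − λ)(α − h(θ))·(φ − θ)/(φ·(h(θ) − λ) + θ·(α − h(θ))). -/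
/-!
The right-hand side `F(x, y) = (y - λ)(α - y) / ((α - λ) x)` of the Dini bound is a logistic
vector field, and the right-hand side of the claimed inequality is the value at `φ` of its
solution through `(θ, h θ)`. On `[θ, 1]` the field is `θ⁻¹`-Lipschitz in `y ∈ [λ, α]`, so the
comparison principle for Dini subsolutions keeps `h` below that solution.
-/

open Filter

open Set Topology Real

theorem eventually_slope_lt_of_upperDini_lt {f : ℝ → ℝ} {x r : ℝ}
    (h : upperDini f x < r) : ∀ᶠ z in 𝓝[>] x, slope f x z < r := by
  have hε : ∀ᶠ ε in 𝓝[>] (0 : ℝ), (f (x + ε) - f x) / ε < r := by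
    simpa only [EReal.coe_lt_coe_iff] using eventually_lt_of_limsup_lt h
  rw [← add_zero x, ← map_add_left_nhdsGT, eventually_map]
  filter_upwards [hε] with ε hε
  rwa [slope_def_field, add_zero, add_sub_cancel_left]

theorem image_le_of_upperDini_le_deriv_add_mul_abs {f B B' : ℝ → ℝ} {a b L : ℝ}
    (hf : ContinuousOn f (Icc a b)) (hB : ContinuousOn B (Icc a b))
    (hB' : ∀ x ∈ Ico a b, HasDerivWithinAt B (B' x) (Ici x) x) (ha : f a ≤ B a)
    (bound : ∀ x ∈ Ico a b, upperDini f x ≤ ((B' x + L * |f x - B x| : ℝ) : EReal)) :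
    ∀ ⦃x⦄, x ∈ Icc a b → f x ≤ B x := by
  intro x hx
  -- fence `f` by `B + ε e^{(L+1)(t-a)}`, whose excess slope `(L+1)ε e^{…}` beats `L |f - B|`
  set g : ℝ → ℝ := fun t ↦ exp ((L + 1) * (t - a))
  have hg : ∀ t, HasDerivAt g ((L + 1) * g t) t := fun t ↦ by
    simpa [g, mul_comm] using ((hasDerivAt_id t).sub_const a).const_mul (L + 1) |>.exp
  have hfence : ∀ ε > 0, f x ≤ B x + ε * g x := by
    intro ε hε
    refine image_le_of_liminf_slope_right_lt_deriv_boundary'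
      (f' := fun t ↦ B' t + L * |f t - B t|) hf
      (fun t ht r hr ↦ (eventually_slope_lt_of_upperDini_lt
        ((bound t ht).trans_lt (EReal.coe_lt_coe_iff.2 hr))).frequently)
      (B := fun t ↦ B t + ε * g t) (B' := fun t ↦ B' t + ε * ((L + 1) * g t))
      (by simpa [g] using ha.trans (le_add_of_nonneg_right hε.le))
      (hB.add (continuousOn_const.mul fun t _ ↦ (hg t).continuousAt.continuousWithinAt))
      (fun t ht ↦ (hB' t ht).add ((hg t).hasDerivWithinAt.const_mul ε)) ?_ hx
    intro t _ ht
    have hpos : 0 < ε * g t := mul_pos hε (exp_pos _)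
    rw [ht, add_sub_cancel_left, abs_of_pos hpos]
    linarith
  refine le_of_forall_pos_le_add fun ε hε ↦ ?_
  have := hfence (ε / g x) (div_pos hε (exp_pos _))
  rwa [div_mul_cancel₀ _ (exp_pos _).ne'] at this

noncomputable def logisticRate (lam alp x y : ℝ) : ℝ :=
  (y - lam) * (alp - y) / ((alp - lam) * x)

/-- The solution of `y' = logisticRate lam alp x y` with `y θ = y₀`. -/
noncomputable def logisticSolution (lam alp θ y₀ x : ℝ) : ℝ :=
  y₀ + (y₀ - lam) * (alp - y₀) * (x - θ) / (x * (y₀ - lam) + θ * (alp - y₀))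

section Logistic

variable {lam alp θ y₀ x : ℝ}

theorem abs_logisticRate_sub_le {y z : ℝ} (hy : y ∈ Icc lam alp) (hz : z ∈ Icc lam alp)
    (hla : lam < alp) (hx : 0 < x) :
    |logisticRate lam alp x y - logisticRate lam alp x z| ≤ |y - z| / x := by
  have hs : 0 < alp - lam := sub_pos.2 hla
  have hfactor : logisticRate lam alp x y - logisticRate lam alp x z =
      (y - z) * (alp + lam - y - z) / ((alp - lam) * x) := by
    unfold logisticRate; field_simp; ring
  have hsum : |alp + lam - y - z| ≤ alp - lam :=
    abs_le.2 ⟨by linarith [hy.2, hz.2], by linarith [hy.1, hz.1]⟩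
  rw [hfactor, abs_div, abs_mul, abs_of_pos (mul_pos hs hx), div_le_div_iff₀ (mul_pos hs hx) hx]
  calc |y - z| * |alp + lam - y - z| * x ≤ |y - z| * (alp - lam) * x := by gcongr
    _ = |y - z| * ((alp - lam) * x) := by ring

theorem logisticSolution_denom_pos (hy : y₀ ∈ Icc lam alp) (hla : lam < alp) (hθ : 0 < θ)
    (hx : 0 < x) : 0 < x * (y₀ - lam) + θ * (alp - y₀) := by
  rcases hy.2.lt_or_eq with hlt | rfl
  · have := mul_nonneg hx.le (sub_nonneg.2 hy.1)
    have := mul_pos hθ (sub_pos.2 hlt)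
    linarith
  · simpa using mul_pos hx (sub_pos.2 hla)

theorem logisticSolution_sub_lam (hD : x * (y₀ - lam) + θ * (alp - y₀) ≠ 0) :
    logisticSolution lam alp θ y₀ x - lam =
      (y₀ - lam) * (alp - lam) * x / (x * (y₀ - lam) + θ * (alp - y₀)) := by
  rw [eq_div_iff hD, logisticSolution, add_sub_right_comm, add_mul, div_mul_cancel₀ _ hD]
  ring

theorem sub_logisticSolution (hD : x * (y₀ - lam) + θ * (alp - y₀) ≠ 0) :
    alp - logisticSolution lam alp θ y₀ x =
      (alp - y₀) * (alp - lam) * θ / (x * (y₀ - lam) + θ * (alp - y₀)) := by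
  rw [eq_div_iff hD, logisticSolution, sub_add_eq_sub_sub, sub_mul, sub_mul, div_mul_cancel₀ _ hD]
  ring

theorem logisticSolution_mem_Icc (hy : y₀ ∈ Icc lam alp) (hla : lam < alp) (hθ : 0 < θ)
    (hx : 0 < x) : logisticSolution lam alp θ y₀ x ∈ Icc lam alp := by
  have hD := logisticSolution_denom_pos hy hla hθ hx
  have h₁ := sub_nonneg.2 hy.1
  have h₂ := sub_nonneg.2 hy.2
  have h₃ := sub_pos.2 hla
  constructor
  · rw [← sub_nonneg, logisticSolution_sub_lam hD.ne']; positivity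
  · rw [← sub_nonneg, sub_logisticSolution hD.ne']; positivity

theorem hasDerivAt_logisticSolution (hy : y₀ ∈ Icc lam alp) (hla : lam < alp) (hθ : 0 < θ)
    (hx : 0 < x) : HasDerivAt (logisticSolution lam alp θ y₀)
      (logisticRate lam alp x (logisticSolution lam alp θ y₀ x)) x := by
  have hD := (logisticSolution_denom_pos hy hla hθ hx).ne'
  have hderiv := ((((hasDerivAt_id' x).sub_const θ).const_mul ((y₀ - lam) * (alp - y₀))).div
    (((hasDerivAt_id' x).mul_const (y₀ - lam)).add_const (θ * (alp - y₀))) hD).const_add y₀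
  refine hderiv.congr_deriv ?_
  rw [logisticRate, logisticSolution_sub_lam hD, sub_logisticSolution hD]
  field_simp
  ring

end Logistic

theorem stmt7_general (lam alp : ℝ) (hla : lam < alp)
    (h : ℝ → ℝ)
    (hmap : ∀ θ ∈ Set.Icc (0 : ℝ) 1, h θ ∈ Set.Icc lam alp)
    (hcont : ContinuousOn h (Set.Ioc 0 1))
    (hdini : ∀ θ ∈ Set.Ioo (0 : ℝ) 1,
      upperDini h θ ≤ (((h θ - lam) * (alp - h θ) / ((alp - lam) * θ) : ℝ) : EReal)) :
    ∀ θ φ : ℝ, 0 < θ → θ ≤ φ → φ ≤ 1 →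
      h φ ≤ h θ + (h θ - lam) * (alp - h θ) * (φ - θ) /
        (φ * (h θ - lam) + θ * (alp - h θ)) := by
  intro θ φ hθ hθφ hφ1
  have hθ₀ := hmap θ ⟨hθ.le, hθφ.trans hφ1⟩
  set B := logisticSolution lam alp θ (h θ)
  have hpos : ∀ x ∈ Icc θ 1, 0 < x := fun x hx ↦ hθ.trans_le hx.1
  have hB : ∀ x ∈ Icc θ 1, HasDerivAt B (logisticRate lam alp x (B x)) x := fun x hx ↦
    hasDerivAt_logisticSolution hθ₀ hla hθ (hpos x hx)
  have hlip : ∀ x ∈ Icc θ 1,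
      logisticRate lam alp x (h x) ≤ logisticRate lam alp x (B x) + θ⁻¹ * |h x - B x| := by
    intro x hx
    have hdist := abs_logisticRate_sub_le (hmap x ⟨(hpos x hx).le, hx.2⟩)
      (logisticSolution_mem_Icc hθ₀ hla hθ (hpos x hx)) hla (hpos x hx)
    have hθx : |h x - B x| / x ≤ θ⁻¹ * |h x - B x| := by
      rw [div_eq_inv_mul]; gcongr; exact hx.1
    linarith [le_abs_self (logisticRate lam alp x (h x) - logisticRate lam alp x (B x))]
  exact image_le_of_upperDini_le_deriv_add_mul_abs (L := θ⁻¹)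
    (hcont.mono fun x hx ↦ ⟨hpos x hx, hx.2⟩)
    (fun x hx ↦ (hB x hx).continuousAt.continuousWithinAt)
    (fun x hx ↦ (hB x (Ico_subset_Icc_self hx)).hasDerivWithinAt)
    (by simp [B, logisticSolution])
    (fun x hx ↦ (hdini x ⟨hpos x (Ico_subset_Icc_self hx), hx.2⟩).trans
      (EReal.coe_le_coe_iff.2 (hlip x (Ico_subset_Icc_self hx))))
    ⟨hθφ, hφ1⟩

/-- If `h : [0,1] → [λ,α]` is non-decreasing, continuous on `(0,1]`, and satisfies the Dini
bound `D⁺h(θ) ≤ (h(θ)−λ)(α−h(θ))/((α−λ)θ)` on `(0,1)`, then for `0 < θ ≤ φ ≤ 1`,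
`h(φ) ≤ h(θ) + (h(θ)−λ)(α−h(θ))(φ−θ)/(φ(h(θ)−λ)+θ(α−h(θ)))`. -/
theorem stmt7 (lam alp : ℝ) (h0 : 0 ≤ lam) (hla : lam < alp)
    (h : ℝ → ℝ)
    (hmap : ∀ θ ∈ Set.Icc (0 : ℝ) 1, h θ ∈ Set.Icc lam alp)
    (hmono : MonotoneOn h (Set.Icc 0 1))
    (hcont : ContinuousOn h (Set.Ioc 0 1))
    (hdini : ∀ θ ∈ Set.Ioo (0 : ℝ) 1,
      upperDini h θ ≤ (((h θ - lam) * (alp - h θ) / ((alp - lam) * θ) : ℝ) : EReal)) :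
    ∀ θ φ : ℝ, 0 < θ → θ ≤ φ → φ ≤ 1 →
      h φ ≤ h θ + (h θ - lam) * (alp - h θ) * (φ - θ) /
        (φ * (h θ - lam) + θ * (alp - h θ)) :=
  stmt7_general lam alp hla h hmap hcont hdini
end

section
/- Let 0 ≤ λ < α < ∞ and let h: (0,1] → [λ, α] satisfy: for all 0 < θ ≤ φ ≤ 1, h(θ) ≤ h(φ) ≤ h(θ) + (h(θ) − λ)(α − h(θ))·(φ − θ)/(φ·(h(θ) − λ) + θ·(α − h(θ))). If h(1) > 0, then the function θ ↦ h(θ)/θ is strictly decreasing on (0,1]. -/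
/-- Strict starshapedness: if `h : (0,1] → [λ,α]` (with `0 ≤ λ < α < ∞`) satisfies the
two-sided bound `h(θ) ≤ h(φ) ≤ h(θ) + (h(θ)−λ)(α−h(θ))(φ−θ)/(φ(h(θ)−λ)+θ(α−h(θ)))`
for `0 < θ ≤ φ ≤ 1`, and `h(1) > 0`, then `θ ↦ h(θ)/θ` is strictly decreasing on `(0,1]`. -/
theorem stmt8 (lam alp : ℝ) (h0 : 0 ≤ lam) (hla : lam < alp)
    (h : ℝ → ℝ)
    (hmap : ∀ θ ∈ Set.Ioc (0 : ℝ) 1, h θ ∈ Set.Icc lam alp)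
    (hbound : ∀ θ φ : ℝ, 0 < θ → θ ≤ φ → φ ≤ 1 →
      h θ ≤ h φ ∧ h φ ≤ h θ + (h θ - lam) * (alp - h θ) * (φ - θ) /
        (φ * (h θ - lam) + θ * (alp - h θ)))
    (h1 : 0 < h 1) :
    StrictAntiOn (fun θ => h θ / θ) (Set.Ioc 0 1) := by
  intro θ hθ φ hφ hlt
  obtain ⟨hθ0, hθ1⟩ := hθ
  obtain ⟨hφ0, hφ1⟩ := hφ
  obtain ⟨haL, haA⟩ := hmap θ ⟨hθ0, hθ1⟩
  set a := h θ with ha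
  -- a > 0
  have ha0 : 0 < a := by
    rcases lt_or_ge 0 a with h' | h'
    · exact h'
    have haz : a = 0 := le_antisymm h' (h0.trans haL)
    have hlz : lam = 0 := le_antisymm (haz ▸ haL) h0
    have hub1 := (hbound θ 1 hθ0 hθ1 le_rfl).2
    rw [← ha, haz, hlz] at hub1
    simp at hub1
    linarith
  have hD : 0 < φ * (a - lam) + θ * (alp - a) := by
    nlinarith [mul_le_mul_of_nonneg_right hlt.le (sub_nonneg.mpr haL),
      mul_pos hθ0 (sub_pos.mpr hla)]
  have hP : 0 < φ * a * (a - lam) + θ * lam * (alp - a) := by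
    rcases eq_or_lt_of_le haL with heq | hgt
    · have h1' : a - lam = 0 := by rw [heq]; ring
      have h2' : 0 < alp - a := by rw [← heq]; linarith
      have hl0 : 0 < lam := by rw [heq]; exact ha0
      have hz : φ * a * (a - lam) = 0 := by rw [h1']; ring
      nlinarith [mul_pos (mul_pos hθ0 hl0) h2']
    · nlinarith [mul_pos hφ0 (mul_pos ha0 (sub_pos.mpr hgt)),
        mul_nonneg (mul_nonneg hθ0.le h0) (sub_nonneg.mpr haA)]
  have hub := (hbound θ φ hθ0 hlt.le hφ1).2
  rw [← ha] at hub
  have hkey : h φ < a * φ / θ := by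
    have heq : a * φ / θ - a = a * (φ - θ) / θ := by
      field_simp
    have h2 : (a - lam) * (alp - a) * (φ - θ) /
        (φ * (a - lam) + θ * (alp - a)) < a * φ / θ - a := by
      rw [heq, div_lt_div_iff₀ hD hθ0]
      nlinarith [mul_pos (sub_pos.mpr hlt) hP]
    linarith
  show h φ / φ < a / θ
  rw [div_lt_div_iff₀ hφ0 hθ0]
  have h3 : h φ * θ < (a * φ / θ) * θ := mul_lt_mul_of_pos_right hkey hθ0
  rwa [div_mul_cancel₀ _ hθ0.ne'] at h3
end

section
/- Let 0 ≤ λ < α < ∞ and suppose h: (0,1] → [λ, α] satisfies h(θ) ≤ h(φ) ≤ h(θ) + (h(θ)−λ)(α−h(θ))(φ−θ)/(φ(h(θ)−λ)+θ(α−h(θ))) for all 0 < θ ≤ φ ≤ 1. Then for each fixed θ₀ ∈ (0,1], h is Lipschitz on [θ₀,1] with Lipschitz constant (α − λ)/(4θ₀). -/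
/-- If `h : (0,1] → [λ,α]` satisfies the two-sided bound
`h(θ) ≤ h(φ) ≤ h(θ) + (h(θ)−λ)(α−h(θ))(φ−θ)/(φ(h(θ)−λ)+θ(α−h(θ)))` for `0 < θ ≤ φ ≤ 1`,
then `h` is Lipschitz on `[θ₀,1]` with constant `(α−λ)/(4θ₀)` for each `θ₀ ∈ (0,1]`. -/
theorem stmt9 (lam alp : ℝ) (h0 : 0 ≤ lam) (hla : lam < alp)
    (h : ℝ → ℝ)
    (hmap : ∀ θ ∈ Set.Ioc (0 : ℝ) 1, h θ ∈ Set.Icc lam alp)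
    (hbound : ∀ θ φ : ℝ, 0 < θ → θ ≤ φ → φ ≤ 1 →
      h θ ≤ h φ ∧ h φ ≤ h θ + (h θ - lam) * (alp - h θ) * (φ - θ) /
        (φ * (h θ - lam) + θ * (alp - h θ)))
    (θ0 : ℝ) (hθ0 : 0 < θ0) (hθ01 : θ0 ≤ 1) :
    ∀ x ∈ Set.Icc θ0 1, ∀ y ∈ Set.Icc θ0 1,
      |h x - h y| ≤ (alp - lam) / (4 * θ0) * |x - y| := by
  have key : ∀ x ∈ Set.Icc θ0 1, ∀ y ∈ Set.Icc θ0 1, x ≤ y →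
      h y - h x ≤ (alp - lam) / (4 * θ0) * (y - x) := by
    intro x hx y hy hxy
    have hxpos : 0 < x := lt_of_lt_of_le hθ0 hx.1
    obtain ⟨hmono, hub⟩ := hbound x y hxpos hxy hy.2
    have hmem := hmap x ⟨hxpos, le_trans hxy hy.2⟩
    have h1 : 0 ≤ h x - lam := by linarith [hmem.1]
    have h2 : 0 ≤ alp - h x := by linarith [hmem.2]
    have hden : θ0 * (alp - lam) ≤ y * (h x - lam) + x * (alp - h x) := by
      nlinarith [hx.1, hy.1, hxy]
    have hdenpos : 0 < θ0 * (alp - lam) := mul_pos hθ0 (by linarith)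
    have hnum : (h x - lam) * (alp - h x) * (y - x) ≤
        ((alp - lam) / 2) ^ 2 * (y - x) := by
      nlinarith [sq_nonneg (h x - lam - (alp - h x))]
    have hnumnn : 0 ≤ (h x - lam) * (alp - h x) * (y - x) := by
      exact mul_nonneg (mul_nonneg h1 h2) (by linarith)
    calc h y - h x ≤ (h x - lam) * (alp - h x) * (y - x) /
          (y * (h x - lam) + x * (alp - h x)) := by linarith
      _ ≤ ((alp - lam) / 2) ^ 2 * (y - x) / (θ0 * (alp - lam)) :=
          div_le_div₀ (by nlinarith) hnum hdenpos hden
      _ = (alp - lam) / (4 * θ0) * (y - x) := by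
          field_simp
          ring
  intro x hx y hy
  rcases le_total x y with hxy | hxy
  · rw [abs_sub_comm, abs_of_nonneg (by linarith [(hbound x y (lt_of_lt_of_le hθ0 hx.1) hxy hy.2).1]),
      abs_sub_comm, abs_of_nonneg (by linarith)]
    exact key x hx y hy hxy
  · rw [abs_of_nonneg (by linarith [(hbound y x (lt_of_lt_of_le hθ0 hy.1) hxy hx.2).1]),
      abs_of_nonneg (by linarith)]
    exact key y hy x hx hxy
end
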